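/- Let p : E → B be a restriction functor between restriction categories and let f : Y → X be a p-prone morphism of E such that the restriction idempotent f̄ splits in E. Then p(f) is a restriction retraction in B if and only if f is a restriction retraction in E. -/
import Mathlib


open CategoryTheory

universe v₁ u₁ v₂ u₂ v₃ u₃

/-- A restriction category: a category equipped with a restriction combinator
satisfying the four restriction axioms [R.1]–[R.4]. -/
class RestrictionCategory (C : Type u₁) [Category.{v₁} C] where
  rest : ∀ {A B : C}, (A ⟶ B) → (A ⟶ A)
  rest_comp_self : ∀ {A B : C} (f : A ⟶ B), rest f ≫ f = f
  rest_comm : ∀ {A B C' : C} (f : A ⟶ B) (g : A ⟶ C'), rest f ≫ rest g = rest g ≫ rest f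
  rest_rest_comp : ∀ {A B C' : C} (f : A ⟶ B) (g : A ⟶ C'),
    rest (rest f ≫ g) = rest f ≫ rest g
  comp_rest : ∀ {A B C' : C} (f : A ⟶ B) (g : B ⟶ C'),
    f ≫ rest g = rest (f ≫ g) ≫ f

open RestrictionCategory

/-- A restriction semifunctor: preserves composition and restriction
(but not necessarily identities). -/
structure RestrictionSemifunctor (E : Type u₁) (B : Type u₂) [Category.{v₁} E]
    [Category.{v₂} B] [RestrictionCategory E] [RestrictionCategory B] where
  obj : E → B
  map : ∀ {X Y : E}, (X ⟶ Y) → (obj X ⟶ obj Y)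
  map_comp : ∀ {X Y Z : E} (f : X ⟶ Y) (g : Y ⟶ Z), map (f ≫ g) = map f ≫ map g
  map_rest : ∀ {X Y : E} (f : X ⟶ Y), map (rest f) = rest (map f)

variable {E : Type u₁} {B : Type u₂} [Category.{v₁} E] [Category.{v₂} B]
  [RestrictionCategory E] [RestrictionCategory B]

/-- A morphism `f' : X' ⟶ X` is `p`-prone if every precise triangle
`h ≫ p(f') = p(g)` in the base has a unique precise lifting. -/
def RestrictionSemifunctor.IsProne (p : RestrictionSemifunctor E B) {X' X : E}
    (f' : X' ⟶ X) : Prop :=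
  ∀ (Y : E) (g : Y ⟶ X) (h : p.obj Y ⟶ p.obj X'),
    h ≫ p.map f' = p.map g → rest h = rest (p.map g) →
    ∃! ht : Y ⟶ X', p.map ht = h ∧ ht ≫ f' = g ∧ rest ht = rest g

/-- A restriction retraction: `r : A ⟶ B` with a section `m : B ⟶ A` satisfying
`r ≫ m = r̄` and `m ≫ r = 𝟙 B`. -/
def IsRestrictionRetraction {C : Type u₃} [Category.{v₃} C] [RestrictionCategory C]
    {A B : C} (r : A ⟶ B) : Prop :=
  ∃ m : B ⟶ A, r ≫ m = rest r ∧ m ≫ r = 𝟙 B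

/-- A restriction idempotent `e` on `X` splits if `e = r ≫ m` with `m ≫ r = 𝟙`. -/
def RestIdemSplits {C : Type u₃} [Category.{v₃} C] [RestrictionCategory C]
    {X : C} (e : X ⟶ X) : Prop :=
  ∃ (X' : C) (r : X ⟶ X') (m : X' ⟶ X), r ≫ m = e ∧ m ≫ r = 𝟙 X'

section Helpers

variable {C : Type u₃} [Category.{v₃} C] [RestrictionCategory C]

lemma rest_id' (A : C) : rest (𝟙 A) = 𝟙 A := by
  have := rest_comp_self (𝟙 A)
  simpa using this

lemma rest_idem' {A B' : C} (f : A ⟶ B') : rest f ≫ rest f = rest f := by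
  have h := rest_rest_comp (rest f) f  -- no
  have h1 : rest (rest f ≫ f) = rest f ≫ rest f := rest_rest_comp f f
  rw [rest_comp_self] at h1
  exact h1.symm

lemma rest_rest' {A B' : C} (f : A ⟶ B') : rest (rest f) = rest f := by
  have h1 : rest (rest f ≫ rest f) = rest f ≫ rest (rest f) := rest_rest_comp f (rest f)
  rw [rest_idem'] at h1
  have h2 : rest f ≫ rest (rest f) = rest (rest f) ≫ rest f := rest_comm f (rest f)
  have h3 : rest (rest f) ≫ rest f = rest f := rest_comp_self (rest f)
  rw [h1, h2, h3]

lemma rest_comp_absorb {A B' C' : C} (f : A ⟶ B') (g : B' ⟶ C') :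
    rest f ≫ rest (f ≫ g) = rest (f ≫ g) := by
  have h1 : rest (rest f ≫ (f ≫ g)) = rest f ≫ rest (f ≫ g) := rest_rest_comp f (f ≫ g)
  rw [← Category.assoc, rest_comp_self] at h1
  exact h1.symm

lemma rest_of_section {A B' : C} (m : A ⟶ B') (g : B' ⟶ A) (h : m ≫ g = 𝟙 A) :
    rest m = 𝟙 A := by
  have h1 := rest_comp_absorb m g
  rw [h, rest_id'] at h1
  simpa using h1

lemma rest_comp_rest' {A B' C' : C} (f : A ⟶ B') (g : B' ⟶ C') :
    rest (f ≫ rest g) = rest (f ≫ g) := by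
  have h1 : f ≫ rest g = rest (f ≫ g) ≫ f := comp_rest f g
  rw [h1, rest_rest_comp]
  have h2 : rest (f ≫ g) ≫ rest f = rest f ≫ rest (f ≫ g) := rest_comm (f ≫ g) f
  rw [h2, rest_comp_absorb]

end Helpers

/-- For a restriction functor `p` (a restriction semifunctor preserving identities)
and a p-prone `f` whose restriction idempotent `f̄` splits: `p(f)` is a restriction
retraction iff `f` is a restriction retraction. -/
theorem prone_restrictionRetraction_iff (p : RestrictionSemifunctor E B)
    (hpid : ∀ Z : E, p.map (𝟙 Z) = 𝟙 (p.obj Z))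
    {Y X : E} (f : Y ⟶ X) (hf : p.IsProne f) (hsplit : RestIdemSplits (rest f)) :
    IsRestrictionRetraction (p.map f) ↔ IsRestrictionRetraction f := by
  constructor
  · rintro ⟨m, hm1, hm2⟩
    -- lift the section m through proneness
    have hrestm : rest m = 𝟙 (p.obj X) := rest_of_section m (p.map f) hm2
    obtain ⟨n, ⟨hpn, hnf, hrn⟩, -⟩ :=
      hf X (𝟙 X) m (by rw [hm2, hpid]) (by rw [hrestm, hpid, rest_id'])
    -- show f ≫ n = rest f via uniqueness of precise liftings of f
    obtain ⟨t, -, huniq⟩ :=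
      hf Y f (rest (p.map f)) (rest_comp_self (p.map f)) (rest_rest' (p.map f))
    have h1 : f ≫ n = t := by
      refine huniq _ ⟨?_, ?_, ?_⟩
      · rw [p.map_comp, hpn, hm1]
      · rw [Category.assoc, hnf, Category.comp_id]
      · rw [← rest_comp_rest' f n, hrn, rest_id'] ; simp
    have h2 : rest f = t := by
      refine huniq _ ⟨?_, ?_, ?_⟩
      · rw [p.map_rest]
      · exact rest_comp_self f
      · exact rest_rest' f
    exact ⟨n, h1.trans h2.symm, hnf⟩
  · rintro ⟨m, hm1, hm2⟩
    refine ⟨p.map m, ?_, ?_⟩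
    · rw [← p.map_comp, hm1, p.map_rest]
    · rw [← p.map_comp, hm2, hpid]
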